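/- arXiv:2602.06894 — 4 statements merged into one kernel-verified Lean document; each statement's English description precedes it below -/
import Mathlib

section
/- Let S = {(2ⁿ, 4ⁿ) : n ∈ ℕ, n ≠ 1} ⊆ ℝ². Then for every real number β ≤ 3, the point (3/2, β) does not belong to the closure of the convex hull of S in ℝ². -/
open Set

theorem closure_convexHull_subset_halfSpace {E : Type*} [AddCommGroup E] [Module ℝ E]
    [TopologicalSpace E] (f : E →L[ℝ] ℝ) {c : ℝ} {s : Set E} (hs : ∀ x ∈ s, f x ≤ c) :
    closure (convexHull ℝ s) ⊆ {x | f x ≤ c} :=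
  closure_minimal (convexHull_min hs (convex_halfSpace_le f.isLinear c))
    (isClosed_le f.continuous continuous_const)

/-- With `t = 2ⁿ` this is `(t - 1)(t - 4) ≥ 0`, which fails only for `t = 2`. -/
theorem five_mul_two_pow_sub_four_pow_le {n : ℕ} (hn : n ≠ 1) :
    5 * (2 : ℝ) ^ n - 4 ^ n ≤ 4 := by
  have h4 : (4 : ℝ) ^ n = (2 ^ n) ^ 2 := by rw [← pow_mul, mul_comm, pow_mul]; norm_num
  rw [h4]
  obtain rfl | hn2 : n = 0 ∨ 2 ≤ n := by omega
  · norm_num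
  · have : (4 : ℝ) ≤ 2 ^ n := by
      calc (4 : ℝ) = 2 ^ 2 := by norm_num
        _ ≤ 2 ^ n := pow_le_pow_right₀ (by norm_num) hn2
    nlinarith

/-- For every `β ≤ 3`, the point `(3/2, β)` does not lie in the closed convex hull of
the set `{(2ⁿ, 4ⁿ) : n ∈ ℕ, n ≠ 1} ⊆ ℝ²`. -/
theorem point_not_in_closed_convex_hull :
    ∀ β : ℝ, β ≤ 3 →
      ((3 / 2 : ℝ), β) ∉
        closure (convexHull ℝ
          {p : ℝ × ℝ | ∃ n : ℕ, n ≠ 1 ∧ p = ((2 : ℝ) ^ n, (4 : ℝ) ^ n)}) := by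
  intro β hβ hmem
  -- the line `y = 5x - 4` through `(1, 1)` and `(4, 16)` separates `(3/2, β)` from the set
  let f : ℝ × ℝ →L[ℝ] ℝ := 5 • ContinuousLinearMap.fst ℝ ℝ ℝ - ContinuousLinearMap.snd ℝ ℝ ℝ
  have hf (p : ℝ × ℝ) : f p = 5 * p.1 - p.2 := by simp [f]
  have hsep : f (3 / 2, β) ≤ 4 := closure_convexHull_subset_halfSpace f (by
    rintro p ⟨n, hn, rfl⟩
    simpa [hf] using five_mul_two_pow_sub_four_pow_le hn) hmem
  rw [hf] at hsep
  dsimp only at hsep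
  linarith
end

section
/- Let p : ℕ → ℝ satisfy p(n) ≥ 0 for all n and p(1) = 0. Suppose p is summable with ∑ₙ p(n) = 1, the function n ↦ p(n)·2ⁿ is summable with ∑ₙ p(n)·2ⁿ = 3/2, and the function n ↦ p(n)·4ⁿ is summable. Then ∑ₙ p(n)·4ⁿ ≥ 7/2 (in particular this sum is strictly greater than 3). -/
/-! Every point `(2ⁿ, 4ⁿ)` with `n ≠ 1` lies on or above the chord `y = 5x - 4` of the parabola
`y = x²` through `(1, 1)` and `(4, 16)`, because no power of two lies strictly between `1` and `4`.
Averaging this linear lower bound against `p` gives `∑ p n 4ⁿ ≥ 5 · 3/2 - 4 · 1 = 7/2`. -/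

theorem le_tsum_mul_of_affine_le {α : Type*} {p a b : α → ℝ} (c d : ℝ)
    (hp : ∀ i, 0 ≤ p i) (hbound : ∀ i, p i ≠ 0 → c * a i + d ≤ b i)
    (hsum : Summable p) (hsuma : Summable fun i => p i * a i)
    (hsumb : Summable fun i => p i * b i) :
    c * ∑' i, p i * a i + d * ∑' i, p i ≤ ∑' i, p i * b i := by
  have hpointwise : ∀ i, c * (p i * a i) + d * p i ≤ p i * b i := fun i => by
    rcases eq_or_ne (p i) 0 with hpi | hpi
    · simp [hpi]
    · nlinarith [mul_le_mul_of_nonneg_left (hbound i hpi) (hp i)]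
  rw [← tsum_mul_left, ← tsum_mul_left, ← (hsuma.mul_left c).tsum_add (hsum.mul_left d)]
  exact ((hsuma.mul_left c).add (hsum.mul_left d)).tsum_le_tsum hpointwise hsumb

theorem five_mul_two_pow_sub_four_le_four_pow {n : ℕ} (hn : n ≠ 1) :
    5 * (2 : ℝ) ^ n - 4 ≤ 4 ^ n := by
  have hfour_pow : (4 : ℝ) ^ n = (2 ^ n) ^ 2 := by rw [← pow_mul, pow_mul']; norm_num
  have hgap : (2 : ℝ) ^ n = 1 ∨ 4 ≤ (2 : ℝ) ^ n := by
    rcases Nat.lt_or_ge n 2 with h | h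
    · left; simp [show n = 0 by omega]
    · right; calc (4 : ℝ) = 2 ^ 2 := by norm_num
        _ ≤ 2 ^ n := pow_le_pow_right₀ (by norm_num) h
  rw [hfour_pow]
  rcases hgap with h | h
  · rw [h]; norm_num
  · nlinarith

/-- If `p : ℕ → ℝ` is a nonnegative summable sequence with `p 1 = 0`, total sum `1`,
first moment `∑ p n * 2ⁿ = 3/2`, and summable second moment `∑ p n * 4ⁿ`, then the
second moment is at least `7/2`. -/
theorem second_moment_ge_of_mean_three_halves (p : ℕ → ℝ)
    (hp : ∀ n, 0 ≤ p n) (hp1 : p 1 = 0)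
    (hsum : Summable p) (htotal : ∑' n, p n = 1)
    (hsum2 : Summable fun n => p n * 2 ^ n) (hmean : ∑' n, p n * 2 ^ n = 3 / 2)
    (hsum4 : Summable fun n => p n * 4 ^ n) :
    (7 : ℝ) / 2 ≤ ∑' n, p n * 4 ^ n := by
  have hchord : ∀ n, p n ≠ 0 → 5 * (2 : ℝ) ^ n + -4 ≤ 4 ^ n := fun n hpn => by
    have hn : n ≠ 1 := by rintro rfl; exact hpn hp1
    linarith [five_mul_two_pow_sub_four_le_four_pow hn]
  have hmoments := le_tsum_mul_of_affine_le 5 (-4) hp hchord hsum hsum2 hsum4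
  rw [hmean, htotal] at hmoments
  linarith
end

section
/- Let p : ℕ → ℝ satisfy p(n) ≥ 0 for all n, p(1) = 0 and p(2) = 0. Suppose p is summable with ∑ₙ p(n) = 1, the function n ↦ p(n)·2ⁿ is summable with ∑ₙ p(n)·2ⁿ = 2, and the function n ↦ p(n)·4ⁿ is summable. Then ∑ₙ p(n)·4ⁿ ≥ 10 (in particular this sum is strictly greater than 6). -/
/-!
Every point `(2ⁿ, 4ⁿ)` with `n ∉ {1, 2}` lies on or above the chord `y = 9x - 8` of the parabola
`y = x²` through `x = 1` and `x = 8`, because `x² - 9x + 8 = (x - 1)(x - 8)` and `2ⁿ` never lies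
strictly between `1` and `8` for such `n`. Averaging against `p` gives a second moment of at least
`9 · 2 - 8 = 10`.
-/

/-- A distribution carried by the complement of the open interval `(a, b)` has second moment at
least `(a + b) · mean - a · b`. -/
theorem le_tsum_mul_sq_of_mul_sub_mul_sub_nonneg {ι : Type*} (p x : ι → ℝ) (a b : ℝ)
    (h : ∀ i, 0 ≤ p i * ((x i - a) * (x i - b)))
    (hsum : Summable p) (hsum1 : Summable fun i => p i * x i)
    (hsum2 : Summable fun i => p i * x i ^ 2) :
    (a + b) * ∑' i, p i * x i - a * b * ∑' i, p i ≤ ∑' i, p i * x i ^ 2 := by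
  have hchord : ∀ i, (a + b) * (p i * x i) - a * b * p i ≤ p i * x i ^ 2 := fun i => by
    linarith [h i]
  rw [← tsum_mul_left, ← tsum_mul_left,
    ← (hsum1.mul_left (a + b)).tsum_sub (hsum.mul_left (a * b))]
  exact ((hsum1.mul_left _).sub (hsum.mul_left _)).tsum_le_tsum hchord hsum2

theorem two_pow_sub_one_mul_two_pow_sub_eight_nonneg {n : ℕ} (h1 : n ≠ 1) (h2 : n ≠ 2) :
    0 ≤ ((2 : ℝ) ^ n - 1) * (2 ^ n - 8) := by
  obtain rfl | h3 : n = 0 ∨ 3 ≤ n := by omega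
  · norm_num
  · have h8 : (8 : ℝ) ≤ 2 ^ n := by
      calc (8 : ℝ) = 2 ^ 3 := by norm_num
        _ ≤ 2 ^ n := pow_le_pow_right₀ (by norm_num) h3
    exact mul_nonneg (by linarith) (by linarith)

/-- If `p : ℕ → ℝ` is a nonnegative summable sequence with `p 1 = 0`, `p 2 = 0`,
total sum `1`, first moment `∑ p n * 2ⁿ = 2`, and summable second moment
`∑ p n * 4ⁿ`, then the second moment is at least `10`. -/
theorem second_moment_ge_of_mean_two (p : ℕ → ℝ)
    (hp : ∀ n, 0 ≤ p n) (hp1 : p 1 = 0) (hp2 : p 2 = 0)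
    (hsum : Summable p) (htotal : ∑' n, p n = 1)
    (hsum2 : Summable fun n => p n * 2 ^ n) (hmean : ∑' n, p n * 2 ^ n = 2)
    (hsum4 : Summable fun n => p n * 4 ^ n) :
    (10 : ℝ) ≤ ∑' n, p n * 4 ^ n := by
  have hsq : ∀ n : ℕ, (4 : ℝ) ^ n = ((2 : ℝ) ^ n) ^ 2 := fun n => by
    rw [← pow_mul, mul_comm, pow_mul]; norm_num
  have hsupport : ∀ n, 0 ≤ p n * (((2 : ℝ) ^ n - 1) * (2 ^ n - 8)) := by
    intro n
    by_cases h1 : n = 1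
    · simp [h1, hp1]
    by_cases h2 : n = 2
    · simp [h2, hp2]
    exact mul_nonneg (hp n) (two_pow_sub_one_mul_two_pow_sub_eight_nonneg h1 h2)
  simp only [hsq] at hsum4 ⊢
  have hbound := le_tsum_mul_sq_of_mul_sub_mul_sub_nonneg p (fun n => (2 : ℝ) ^ n) 1 8
    hsupport hsum hsum2 hsum4
  rw [htotal, hmean] at hbound
  linarith
end

section
/- Let T = {(2ⁿ, 4ⁿ) : n ∈ ℕ, n ≠ 1, n ≠ 2} ⊆ ℝ². Then for every real number β ≤ 6, the point (2, β) does not belong to the closure of the convex hull of T in ℝ². -/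
/-!
The line `y = 9x - 8` through `(1, 1)` and `(8, 64)` separates the point `(2, β)`, `β < 10`,
from `T`: every point `(x, x²)` of `T` has `x = 1` or `x ≥ 8`, and there
`x² - 9x + 8 = (x - 1)(x - 8) ≥ 0`. So `T`, and hence its closed convex hull, lies in the closed
half-plane `9x - y ≤ 8`, which does not contain `(2, β)`.
-/

theorem closure_convexHull_subset_setOf_le {E : Type*} [AddCommGroup E] [Module ℝ E]
    [TopologicalSpace E] (f : E →L[ℝ] ℝ) {s : Set E} {r : ℝ} (hs : s ⊆ {x | f x ≤ r}) :
    closure (convexHull ℝ s) ⊆ {x | f x ≤ r} :=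
  closure_minimal (convexHull_min hs (convex_halfSpace_le f.isLinear r))
    (isClosed_le f.continuous continuous_const)

theorem nine_mul_le_sq_add_eight {x : ℝ} (hx : x ≤ 1 ∨ 8 ≤ x) : 9 * x ≤ x ^ 2 + 8 := by
  rcases hx with hx | hx <;> nlinarith

theorem nine_mul_two_pow_le_four_pow_add_eight {n : ℕ} (h1 : n ≠ 1) (h2 : n ≠ 2) :
    9 * (2 : ℝ) ^ n ≤ 4 ^ n + 8 := by
  have hpow : (4 : ℝ) ^ n = (2 ^ n) ^ 2 := by
    rw [← pow_mul, mul_comm, pow_mul]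
    norm_num
  rw [hpow]
  apply nine_mul_le_sq_add_eight
  rcases Nat.eq_zero_or_pos n with rfl | hn
  · simp
  · right
    calc (8 : ℝ) = 2 ^ 3 := by norm_num
      _ ≤ 2 ^ n := pow_le_pow_right₀ (by norm_num) (by omega)

/-- For every `β ≤ 6`, the point `(2, β)` does not lie in the closed convex hull of
the set `{(2ⁿ, 4ⁿ) : n ∈ ℕ, n ∉ {1, 2}} ⊆ ℝ²`. -/
theorem point_not_in_closed_convex_hull' :
    ∀ β : ℝ, β ≤ 6 →
      ((2 : ℝ), β) ∉
        closure (convexHull ℝ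
          {p : ℝ × ℝ | ∃ n : ℕ, n ≠ 1 ∧ n ≠ 2 ∧ p = ((2 : ℝ) ^ n, (4 : ℝ) ^ n)}) := by
  intro β hβ hmem
  let f : ℝ × ℝ →L[ℝ] ℝ :=
    (9 : ℝ) • ContinuousLinearMap.fst ℝ ℝ ℝ - ContinuousLinearMap.snd ℝ ℝ ℝ
  have hf (p : ℝ × ℝ) : f p = 9 * p.1 - p.2 := rfl
  have hT : {p : ℝ × ℝ | ∃ n : ℕ, n ≠ 1 ∧ n ≠ 2 ∧ p = ((2 : ℝ) ^ n, (4 : ℝ) ^ n)} ⊆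
      {p | f p ≤ 8} := by
    rintro _ ⟨n, h1, h2, rfl⟩
    have := nine_mul_two_pow_le_four_pow_add_eight h1 h2
    simp only [Set.mem_ofPred_eq, hf]
    linarith
  have h2β : f (2, β) ≤ 8 := closure_convexHull_subset_setOf_le f hT hmem
  rw [hf] at h2β
  linarith
end
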